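/- There is no 3×7 matrix over a field of odd characteristic whose columns realize the Fano plane incidence structure: i.e., such that each of the seven triples of columns corresponding to lines of the Fano plane is linearly dependent while every other triple of columns is linearly independent. -/

import Mathlib

/-! Columns 0, 1, 3 of a realization are a basis (they do not form a line), so after a change of
basis they are the standard basis `e₀, e₁, e₂`; this preserves which triples are dependent.
The lines `{0,1,2}`, `{0,3,4}`, `{1,3,5}` then force columns 2, 4, 5 into the shape `(a, b, 0)`,
`(c, 0, d)`, `(0, e, f)`, and with column 6 `= (x, y, z)` the lines `{2,3,6}`, `{1,4,6}`,
`{0,5,6}` say `a y = b x`, `c z = d x`, `e z = f y`. Substituting into the line `{2,4,5}`,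
`a d e + b c f = 0`, gives `2 b d f x y = 0`, while `b, d, f, x, y` are nonzero because the
corresponding triples are not lines. Hence `2 = 0`. -/

/-- The lines of the Fano plane on point set `Fin 7` (0-indexed version of
`{3,5,6},{2,5,7},{1,6,7},{3,4,7},{1,4,5},{2,4,6},{1,2,3}`). -/
def fanoLines : Finset (Finset (Fin 7)) :=
  {{2, 4, 5}, {1, 4, 6}, {0, 5, 6}, {2, 3, 6}, {0, 3, 4}, {1, 3, 5}, {0, 1, 2}}

/-- A 3×7 matrix realizes the Fano plane if a triple of its columns is linearly
dependent exactly when it is a line of the Fano plane. -/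
def RealizesFano (K : Type*) [Field K] (M : Matrix (Fin 3) (Fin 7) K) : Prop :=
  ∀ S : Finset (Fin 7), S.card = 3 →
    ((¬ LinearIndependent K fun i : S => fun r => M r i.1) ↔ S ∈ fanoLines)

open Matrix Finset

section

variable {K : Type*} [Field K]

theorem linearIndependent_cols_image_iff_det_ne_zero {m ι : Type*} [Fintype m] [DecidableEq m]
    [DecidableEq ι] (M : Matrix m ι K) {f : m → ι} (hf : f.Injective) :
    LinearIndependent K (fun i : univ.image f => fun r => M r i.1) ↔
      (M.submatrix id f).det ≠ 0 := by
  let e : m ≃ univ.image f := Equiv.ofBijective (fun t => ⟨f t, mem_image_of_mem f (mem_univ t)⟩)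
    ⟨fun a b h => hf (congrArg Subtype.val h), fun ⟨i, hi⟩ => by
      obtain ⟨t, -, rfl⟩ := mem_image.1 hi
      exact ⟨t, rfl⟩⟩
  rw [← linearIndependent_equiv e, ← isUnit_iff_ne_zero, ← isUnit_iff_isUnit_det,
    ← linearIndependent_cols_iff_isUnit]
  rfl

namespace RealizesFano

variable {M : Matrix (Fin 3) (Fin 7) K}

theorem det_submatrix_eq_zero_iff (hM : RealizesFano K M) {f : Fin 3 → Fin 7} (hf : f.Injective) :
    (M.submatrix id f).det = 0 ↔ univ.image f ∈ fanoLines := by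
  rw [← hM _ ((card_image_of_injective _ hf).trans (card_fin 3)),
    linearIndependent_cols_image_iff_det_ne_zero M hf, not_not]

theorem mul_left (hM : RealizesFano K M) {A : Matrix (Fin 3) (Fin 3) K} (hA : IsUnit A) :
    RealizesFano K (A * M) := by
  intro S hS
  rw [← hM S hS]
  have hcols : (fun i : S => fun r => (A * M) r i.1) =
      A.mulVecLin ∘ fun i : S => fun r => M r i.1 := by
    ext i r
    simp [mul_apply, mulVec, dotProduct]
  rw [hcols, LinearMap.linearIndependent_iff_of_injOn _ (mulVec_injective_iff_isUnit.2 hA).injOn]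

theorem exists_submatrix_eq_one (hM : RealizesFano K M) :
    ∃ N, RealizesFano K N ∧ N.submatrix id ![0, 1, 3] = 1 := by
  set B := M.submatrix id ![0, 1, 3]
  have hB : IsUnit B := by
    rw [isUnit_iff_isUnit_det, isUnit_iff_ne_zero, Ne, hM.det_submatrix_eq_zero_iff (by decide)]
    decide
  refine ⟨B⁻¹ * M, hM.mul_left (isUnit_nonsing_inv_iff.2 hB), ?_⟩
  rw [← submatrix_id_id B⁻¹, submatrix_mul _ _ _ _ _ Function.bijective_id]
  exact nonsing_inv_mul B ((isUnit_iff_isUnit_det B).1 hB)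

theorem two_eq_zero (hM : RealizesFano K M) (hbasis : M.submatrix id ![0, 1, 3] = 1) :
    (2 : K) = 0 := by
  have line (f : Fin 3 → Fin 7) (hf : f.Injective) (hl : univ.image f ∈ fanoLines) :
      (M.submatrix id f).det = 0 := (hM.det_submatrix_eq_zero_iff hf).2 hl
  have nonline (f : Fin 3 → Fin 7) (hf : f.Injective) (hl : univ.image f ∉ fanoLines) :
      (M.submatrix id f).det ≠ 0 := (hM.det_submatrix_eq_zero_iff hf).not.2 hl
  have hcols : ∀ r t, M r (![0, 1, 3] t) = (1 : Matrix (Fin 3) (Fin 3) K) r t :=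
    fun r t => congrFun (congrFun hbasis r) t
  simp only [Nat.succ_eq_add_one, Nat.reduceAdd, Fin.isValue, one_apply, Fin.forall_fin_succ,
    cons_val_zero, cons_val_succ, Fin.succ_zero_eq_one, cons_val_fin_one, Fin.succ_one_eq_two,
    IsEmpty.forall_iff, and_true, ↓reduceIte, zero_ne_one, Fin.reduceEq, Fin.succ_ne_zero] at hcols
  obtain ⟨⟨h00, h01, h03⟩, ⟨h10, h11, h13⟩, h20, h21, h23⟩ := hcols
  have hl012 := line ![0, 1, 2] (by decide) (by decide)
  have hl034 := line ![0, 3, 4] (by decide) (by decide)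
  have hl135 := line ![1, 3, 5] (by decide) (by decide)
  have hl236 := line ![2, 3, 6] (by decide) (by decide)
  have hl056 := line ![0, 5, 6] (by decide) (by decide)
  have hl146 := line ![1, 4, 6] (by decide) (by decide)
  have hl245 := line ![2, 4, 5] (by decide) (by decide)
  have hn023 := nonline ![0, 2, 3] (by decide) (by decide)
  have hn014 := nonline ![0, 1, 4] (by decide) (by decide)
  have hn015 := nonline ![0, 1, 5] (by decide) (by decide)
  have hn136 := nonline ![1, 3, 6] (by decide) (by decide)
  have hn036 := nonline ![0, 3, 6] (by decide) (by decide)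
  simp only [Fin.isValue, det_fin_three, submatrix_apply, id_eq, cons_val_zero, cons_val_one,
    Matrix.cons_val, h00, h01, h03, h10, h11, h13, h20, h21, h23, mul_one, one_mul, mul_zero,
    zero_mul, sub_zero, add_zero, zero_sub, zero_add, neg_eq_zero, sub_self, ne_eq]
    at hl012 hl034 hl135 hl236 hl056 hl146 hl245 hn023 hn014 hn015 hn136 hn036
  rw [hl012, hl034, hl135] at hl245
  have key : 2 * (M 1 2 * M 2 4 * M 2 5 * M 0 6 * M 1 6) = 0 := by
    linear_combination -(M 1 6 * M 2 6) * hl245 + M 2 4 * M 1 5 * M 2 6 * hl236 -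
      M 1 2 * M 2 4 * M 0 6 * hl056 + M 1 2 * M 2 5 * M 1 6 * hl146
  simpa [hn023, hn014, hn015, hn136, hn036] using key

end RealizesFano

end

theorem stmt_7 (K : Type*) [Field K] (p : ℕ) [CharP K p] (hp : Odd p) :
    ¬ ∃ M : Matrix (Fin 3) (Fin 7) K, RealizesFano K M := by
  rintro ⟨M, hM⟩
  obtain ⟨N, hN, hbasis⟩ := hM.exists_submatrix_eq_one
  refine Ring.two_ne_zero ?_ (hN.two_eq_zero hbasis)
  rw [ringChar.eq K p]
  rintro rfl
  exact Nat.not_odd_iff_even.2 even_two hp
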